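/- arXiv:2510.22040 — 4 statements merged into one kernel-verified Lean document; each statement's English description precedes it below -/
import Mathlib

section
/- Let S = {s_1 < s_2 < ... < s_ℓ} ⊆ [k] and consider all top-k lists τ over [n] whose intersection with [k] equals S. For each j ∈ {1,...,ℓ}, the inversion count I_{s_j}(τ) = |{ t > s_j : t ≻_τ s_j }| can take exactly the values 0, 1, ..., k - j, and the map sending τ (with the set and order of its non-[k] elements fixed) to the vector (I_{s_1}(τ), ..., I_{s_ℓ}(τ)) is a bijection onto ∏_{j=1}^{ℓ} {0, 1, ..., k-j}. -/
/-!
Write `S = {s₁ < ⋯ < s_ℓ}`. The smallest element `s₁` is below every other entry of `τ`, so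
`I_{s₁}(τ)` is just the position of `s₁` in `τ`, while deleting `s₁` changes no other
inversion count. Since `τ ↦ (position of s₁, τ with s₁ deleted)` is a bijection onto
`{0, …, k - 1} × (lists for S \ {s₁})`, induction on `ℓ` gives the bijection onto the box
`∏ⱼ {0, …, k - j}`.
-/

open Finset

/-- `I_i(τ)` for a top-`k` list represented as a duplicate-free list: the number of
elements `t > i` ranked above `i` by `τ` (an element ranked by `τ` counts as above
any element not in `τ`). -/
def InvL {n : ℕ} (τ : List (Fin n)) (i : Fin n) : ℕ :=
  (Finset.univ.filter fun t : Fin n =>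
    i < t ∧ t ∈ τ ∧ (i ∉ τ ∨ τ.idxOf t < τ.idxOf i)).card

namespace List

variable {α : Type*} [DecidableEq α]

theorem idxOf_insertIdx_self {a : α} {l : List α} {p : ℕ} (ha : a ∉ l) (hp : p ≤ l.length) :
    (l.insertIdx p a).idxOf a = p := by
  induction l generalizing p with
  | nil => simp_all
  | cons c l ih =>
    rw [mem_cons, not_or] at ha
    cases p with
    | zero => simp
    | succ p =>
      rw [insertIdx_succ_cons, idxOf_cons_ne _ (Ne.symm ha.1), ih ha.2 (by simpa using hp)]

theorem idxOf_insertIdx_of_ne {a x : α} {l : List α} {p : ℕ} (hx : x ≠ a)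
    (hp : p ≤ l.length) :
    (l.insertIdx p a).idxOf x = if l.idxOf x < p then l.idxOf x else l.idxOf x + 1 := by
  induction l generalizing p with
  | nil => simp_all
  | cons c l ih =>
    cases p with
    | zero => simp [idxOf_cons_ne _ hx.symm]
    | succ p =>
      rw [insertIdx_succ_cons]
      by_cases hxc : c = x
      · simp [hxc]
      · rw [idxOf_cons_ne _ hxc, idxOf_cons_ne _ hxc, ih (by simpa using hp)]
        split_ifs <;> omega

theorem idxOf_insertIdx_lt_idxOf_insertIdx_iff {a x y : α} {l : List α} {p : ℕ} (hx : x ≠ a)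
    (hy : y ≠ a) (hp : p ≤ l.length) :
    (l.insertIdx p a).idxOf x < (l.insertIdx p a).idxOf y ↔ l.idxOf x < l.idxOf y := by
  rw [idxOf_insertIdx_of_ne hx hp, idxOf_insertIdx_of_ne hy hp]
  split_ifs <;> omega

theorem erase_insertIdx_self {a : α} {l : List α} {p : ℕ} (ha : a ∉ l) (hp : p ≤ l.length) :
    (l.insertIdx p a).erase a = l := by
  induction l generalizing p with
  | nil => simp_all
  | cons c l ih =>
    rw [mem_cons, not_or] at ha
    cases p with
    | zero => simp
    | succ p =>
      rw [insertIdx_succ_cons, erase_cons_tail (by simpa using Ne.symm ha.1),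
        ih ha.2 (by simpa using hp)]

theorem insertIdx_idxOf_erase {a : α} {l : List α} (ha : a ∈ l) :
    (l.erase a).insertIdx (l.idxOf a) a = l := by
  induction l with
  | nil => simp at ha
  | cons c l ih =>
    by_cases hca : c = a
    · simp [hca]
    · rw [erase_cons_tail (by simpa using hca), idxOf_cons_ne _ hca, insertIdx_succ_cons,
        ih (by simpa [Ne.symm hca] using ha)]

omit [DecidableEq α] in
theorem filter_insertIdx_of_neg {q : α → Bool} {a : α} {l : List α} {p : ℕ}
    (hqa : q a = false) (hp : p ≤ l.length) : (l.insertIdx p a).filter q = l.filter q := by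
  induction l generalizing p with
  | nil => simp_all
  | cons c l ih =>
    cases p with
    | zero => simp [filter_cons, hqa]
    | succ p => rw [insertIdx_succ_cons, filter_cons, filter_cons, ih (by simpa using hp)]

end List

section InvL

variable {n : ℕ}

theorem invL_eq_card (τ : List (Fin n)) (i : Fin n) :
    InvL τ i = #{t | i < t ∧ τ.idxOf t < τ.idxOf i} := by
  unfold InvL
  congr 1
  refine filter_congr fun t _ => and_congr_right fun _ => ?_
  -- an element absent from `τ` has index `τ.length`
  have ht := τ.idxOf_lt_length_iff (a := t)
  have hi := τ.idxOf_lt_length_iff (a := i)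
  have hle := τ.idxOf_le_length (a := i)
  by_cases hiτ : i ∈ τ <;> by_cases htτ : t ∈ τ <;> simp_all

theorem invL_eq_idxOf {τ : List (Fin n)} {s : Fin n} (hnd : τ.Nodup)
    (hmin : ∀ t ∈ τ, s ≤ t) : InvL τ s = τ.idxOf s := by
  have hset : #{t | s < t ∧ τ.idxOf t < τ.idxOf s} = #(τ.take (τ.idxOf s)).toFinset := by
    congr 1
    ext t
    simp only [mem_filter, mem_univ, true_and, List.mem_toFinset]
    constructor
    · rintro ⟨-, ht⟩
      exact (List.mem_take_iff_idxOf_lt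
        (List.idxOf_lt_length_iff.mp (ht.trans_le List.idxOf_le_length))).mpr ht
    · intro ht
      have htτ := List.mem_of_mem_take ht
      have hlt := (List.mem_take_iff_idxOf_lt htτ).mp ht
      exact ⟨(hmin t htτ).lt_of_ne (by rintro rfl; exact hlt.false), hlt⟩
  rw [invL_eq_card, hset, List.toFinset_card_of_nodup (hnd.sublist (List.take_sublist _ _)),
    List.length_take, min_eq_left List.idxOf_le_length]

theorem invL_insertIdx_of_lt {l : List (Fin n)} {a b : Fin n} {p : ℕ} (hab : a < b)
    (hp : p ≤ l.length) : InvL (l.insertIdx p a) b = InvL l b := by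
  simp only [invL_eq_card]
  congr 1
  refine filter_congr fun t _ => and_congr_right fun hbt => ?_
  exact List.idxOf_insertIdx_lt_idxOf_insertIdx_iff (hab.trans hbt).ne' hab.ne' hp

theorem invL_erase_of_lt {τ : List (Fin n)} {a b : Fin n} (hab : a < b) :
    InvL (τ.erase a) b = InvL τ b := by
  by_cases ha : a ∈ τ
  · have hlen := List.length_erase_of_mem ha
    have hlt := List.idxOf_lt_length_iff.mpr ha
    conv_rhs => rw [← List.insertIdx_idxOf_erase ha]
    exact (invL_insertIdx_of_lt hab (by omega)).symm
  · rw [List.erase_of_not_mem ha]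

end InvL

section Interleavings

variable {α : Type*} [DecidableEq α]

def interleavings (l rest : List α) : Set (List α) :=
  {τ | τ.Perm (l ++ rest) ∧ τ.filter (· ∈ rest) = rest}

theorem interleavings_nil (rest : List α) : interleavings [] rest = {rest} := by
  ext τ
  simp only [interleavings, List.nil_append, Set.mem_ofPred_eq, Set.mem_singleton_iff]
  constructor
  · rintro ⟨hperm, hfilter⟩
    rwa [List.filter_eq_self.mpr fun x hx => by simpa using hperm.subset hx] at hfilter
  · rintro rfl
    exact ⟨List.Perm.refl _, List.filter_eq_self.mpr fun x hx => by simpa using hx⟩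

theorem bijOn_idxOf_erase {s : α} {l rest : List α} (hs : s ∉ l ++ rest) :
    Set.BijOn (fun τ => (τ.idxOf s, τ.erase s)) (interleavings (s :: l) rest)
      (Set.Iic (l ++ rest).length ×ˢ interleavings l rest) := by
  have hs_rest : s ∉ rest := fun h => hs (List.mem_append_right l h)
  refine Set.InvOn.bijOn (f' := fun p => p.2.insertIdx p.1 s) ⟨?_, ?_⟩ ?_ ?_
  · rintro τ ⟨hperm, -⟩
    exact List.insertIdx_idxOf_erase (hperm.symm.subset (List.mem_cons_self ..))
  · rintro ⟨p, σ⟩ ⟨hp, hperm, -⟩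
    have hsσ : s ∉ σ := fun h => hs (hperm.subset h)
    simp only [Prod.mk.injEq]
    exact ⟨List.idxOf_insertIdx_self hsσ (hperm.length_eq ▸ hp),
      List.erase_insertIdx_self hsσ (hperm.length_eq ▸ hp)⟩
  · rintro τ ⟨hperm, hfilter⟩
    have hsτ : s ∈ τ := hperm.symm.subset (List.mem_cons_self ..)
    refine ⟨?_, by simpa using hperm.erase s, ?_⟩
    · have hlt := List.idxOf_lt_length_iff.mpr hsτ
      have hlen : τ.length = (l ++ rest).length + 1 := hperm.length_eq
      show τ.idxOf s ≤ (l ++ rest).length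
      omega
    · rw [← List.erase_filter, hfilter, List.erase_of_not_mem hs_rest]
  · rintro ⟨p, σ⟩ ⟨hp, hperm, hfilter⟩
    have hp' : p ≤ σ.length := hperm.length_eq ▸ hp
    exact ⟨(List.perm_insertIdx s σ hp').trans (hperm.cons s),
      (List.filter_insertIdx_of_neg (by simpa using hs_rest) hp').trans hfilter⟩

end Interleavings

theorem Fin.bijOn_cons_prod {β : Type*} {m : ℕ} (s : Set β) (t : Set (Fin m → β)) :
    Set.BijOn (fun p : β × (Fin m → β) => (Fin.cons p.1 p.2 : Fin (m + 1) → β)) (s ×ˢ t)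
      {v | v 0 ∈ s ∧ Fin.tail v ∈ t} :=
  (Fin.consEquiv fun _ => β).bijOn fun p => by simp [Fin.consEquiv]

theorem bijOn_invL_interleavings {n : ℕ} {sl rest : List (Fin n)} (hsl : sl.Pairwise (· < ·))
    (hrest : rest.Nodup) (hlt : ∀ s ∈ sl, ∀ x ∈ rest, s < x) :
    Set.BijOn (fun τ (j : Fin sl.length) => InvL τ sl[j]) (interleavings sl rest)
      {v | ∀ j : Fin sl.length, v j < sl.length + rest.length - j} := by
  induction sl with
  | nil =>
    rw [interleavings_nil]
    exact ⟨fun _ _ j => j.elim0, Set.injOn_singleton _ _,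
      fun v _ => ⟨rest, rfl, funext fun j => j.elim0⟩⟩
  | cons s sl ih =>
    obtain ⟨hs_lt, hsl⟩ := List.pairwise_cons.mp hsl
    have hs_lt_all : ∀ t ∈ sl ++ rest, s < t := by
      simp only [List.mem_append]
      rintro t (ht | ht)
      exacts [hs_lt t ht, hlt s (List.mem_cons_self ..) t ht]
    have hs : s ∉ sl ++ rest := fun h => (hs_lt_all s h).false
    have hlt' : ∀ t ∈ sl, ∀ x ∈ rest, t < x := fun t ht => hlt t (List.mem_cons_of_mem s ht)
    have hnd : (s :: (sl ++ rest)).Nodup := List.nodup_cons.mpr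
      ⟨hs, List.nodup_append.mpr ⟨hsl.nodup, hrest, fun a ha b hb => (hlt' a ha b hb).ne⟩⟩
    have hbox : Set.BijOn
        (fun p : ℕ × (Fin sl.length → ℕ) => (Fin.cons p.1 p.2 : Fin (sl.length + 1) → ℕ))
        (Set.Iic (sl ++ rest).length ×ˢ
          {v | ∀ j : Fin sl.length, v j < sl.length + rest.length - j})
        {v | ∀ j : Fin (s :: sl).length, v j < (s :: sl).length + rest.length - j} := by
      convert Fin.bijOn_cons_prod _ _ using 1
      ext v
      simp only [Fin.forall_fin_succ, List.length_cons, List.length_append, Set.mem_Iic,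
        Set.mem_ofPred_eq, Fin.val_zero, Fin.val_succ, Fin.tail]
      exact and_congr (by omega) (forall_congr' fun j => by omega)
    refine (hbox.comp (((Set.bijOn_id _).prodMap (ih hsl hlt')).comp
      (bijOn_idxOf_erase hs))).congr fun τ hτ => funext (Fin.cases ?_ fun j => ?_)
    · simp only [Function.comp, Fin.cons_zero, id]
      refine (invL_eq_idxOf (hτ.1.nodup_iff.mpr hnd) fun t ht => ?_).symm
      rcases List.mem_cons.mp (hτ.1.subset ht) with rfl | ht
      exacts [le_rfl, (hs_lt_all t ht).le]
    · simp only [Function.comp, Fin.cons_succ]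
      exact invL_erase_of_lt (hs_lt _ (List.getElem_mem _))

theorem Finset.card_le_of_forall_val_lt {n k : ℕ} {S : Finset (Fin n)}
    (hS : ∀ i ∈ S, (i : ℕ) < k) : S.card ≤ k :=
  (card_le_card_of_injOn Fin.val (fun i hi => mem_range.mpr (hS i hi))
    Fin.val_injective.injOn).trans (card_range k).le

theorem setOf_topK_eq_interleavings {n k : ℕ} {S : Finset (Fin n)}
    (hS : ∀ i ∈ S, (i : ℕ) < k) {rest : List (Fin n)} (hnd : rest.Nodup)
    (hlen : rest.length = k - S.card) (hmem : ∀ x ∈ rest, k ≤ (x : ℕ)) :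
    {τ : List (Fin n) | τ.Nodup ∧ τ.length = k ∧
      (∀ i : Fin n, (i : ℕ) < k → (i ∈ τ ↔ i ∈ S)) ∧
      τ.filter (fun x => decide (k ≤ (x : ℕ))) = rest} = interleavings S.sort rest := by
  have hS_rest : ∀ x ∈ S, x ∉ rest := fun x hx hr => (hS x hx).not_ge (hmem x hr)
  have hnd_append : (S.sort ++ rest).Nodup := List.nodup_append.mpr ⟨S.sort_nodup _, hnd,
    fun a ha b hb hab => hS_rest a ((S.mem_sort _).mp ha) (hab ▸ hb)⟩
  have hfilter : ∀ τ : List (Fin n), τ ⊆ S.sort ++ rest →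
      τ.filter (fun x : Fin n => decide (k ≤ (x : ℕ))) = τ.filter (· ∈ rest) := by
    refine fun τ hτ => List.filter_congr fun x hx => ?_
    rcases List.mem_append.mp (hτ hx) with hxS | hxr
    · have hxS := (S.mem_sort _).mp hxS
      simp [hS x hxS, hS_rest x hxS]
    · simp [hmem x hxr, hxr]
  ext τ
  -- the filter condition is elaborated on `τ` and `rest` coerced to `List ℕ`
  simp only [Set.mem_ofPred_eq, List.pure_def, List.bind_eq_flatMap, ← List.map_eq_flatMap,
    List.filter_map, Function.comp_def, List.map_inj_right Fin.val_injective]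
  constructor
  · rintro ⟨hτnd, -, hτS, hτf⟩
    have hmemτ : ∀ x, x ∈ τ ↔ x ∈ S.sort ++ rest := by
      intro x
      rw [List.mem_append, Finset.mem_sort]
      by_cases hx : (x : ℕ) < k
      · rw [hτS x hx, or_iff_left fun hr => (hmem x hr).not_gt hx]
      · have hxS : x ∉ S := fun h => hx (hS x h)
        rw [← hτf, List.mem_filter]
        simp [hxS, not_lt.mp hx]
    exact ⟨(List.perm_ext_iff_of_nodup hτnd hnd_append).mpr hmemτ,
      (hfilter τ fun x hx => (hmemτ x).mp hx).symm.trans hτf⟩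
  · rintro ⟨hperm, hτf⟩
    refine ⟨hperm.nodup_iff.mpr hnd_append, ?_, fun i hi => ?_,
      (hfilter τ hperm.subset).trans hτf⟩
    · rw [hperm.length_eq, List.length_append, Finset.length_sort, hlen]
      have := Finset.card_le_of_forall_val_lt hS
      omega
    · rw [hperm.mem_iff, List.mem_append, Finset.mem_sort]
      exact or_iff_left fun hr => (hmem i hr).not_gt hi

theorem stmt3_general (n k ℓ : ℕ) (S : Finset (Fin n))
    (hS : ∀ i ∈ S, (i : ℕ) < k) (hcard : S.card = ℓ)
    (rest : List (Fin n)) (hnd : rest.Nodup) (hlen : rest.length = k - ℓ)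
    (hmem : ∀ x ∈ rest, k ≤ (x : ℕ)) :
    Set.BijOn
      (fun τ : List (Fin n) => fun j : Fin ℓ =>
        InvL τ ((S.orderIsoOfFin hcard j : S) : Fin n))
      {τ | τ.Nodup ∧ τ.length = k ∧
        (∀ i : Fin n, (i : ℕ) < k → (i ∈ τ ↔ i ∈ S)) ∧
        τ.filter (fun x => decide (k ≤ (x : ℕ))) = rest}
      {v | ∀ j : Fin ℓ, v j < k - (j : ℕ)} := by
  have hℓk : ℓ ≤ k := hcard ▸ Finset.card_le_of_forall_val_lt hS
  rw [setOf_topK_eq_interleavings hS hnd (hcard ▸ hlen) hmem]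
  have hlt : ∀ s ∈ S.sort, ∀ x ∈ rest, s < x := fun s hs x hx =>
    Fin.lt_def.mpr ((hS s ((S.mem_sort _).mp hs)).trans_le (hmem x hx))
  have hbij := bijOn_invL_interleavings S.sortedLT_sort.pairwise hnd hlt
  obtain rfl : S.sort.length = ℓ := (S.length_sort _).trans hcard
  rw [show k = S.sort.length + rest.length by omega]
  exact hbij.congr fun τ _ => funext fun j => rfl

/-- Fix `S = {s_1 < ⋯ < s_ℓ} ⊆ [k]` and a fixed ordered sequence `rest` of `k - ℓ`
elements of `[n] \ [k]`.  Over the top-`k` lists `τ` with `τ ∩ [k] = S` whose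
subsequence of non-`[k]` elements is exactly `rest`, the map
`τ ↦ (I_{s_1}(τ), …, I_{s_ℓ}(τ))` is a bijection onto `∏_{j=1}^{ℓ} {0,1,…,k-j}`. -/
theorem stmt3 (n k ℓ : ℕ) (hk : k ≤ n) (S : Finset (Fin n))
    (hS : ∀ i ∈ S, (i : ℕ) < k) (hcard : S.card = ℓ)
    (rest : List (Fin n)) (hnd : rest.Nodup) (hlen : rest.length = k - ℓ)
    (hmem : ∀ x ∈ rest, k ≤ (x : ℕ)) :
    Set.BijOn
      (fun τ : List (Fin n) => fun j : Fin ℓ =>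
        InvL τ ((S.orderIsoOfFin hcard j : S) : Fin n))
      {τ | τ.Nodup ∧ τ.length = k ∧
        (∀ i : Fin n, (i : ℕ) < k → (i ∈ τ ↔ i ∈ S)) ∧
        τ.filter (fun x => decide (k ≤ (x : ℕ))) = rest}
      {v | ∀ j : Fin ℓ, v j < k - (j : ℕ)} :=
  stmt3_general n k ℓ S hS hcard rest hnd hlen hmem
end

section
/- Under the generalized top-k Mallows model, the probability of the profile S = τ ∩ τ* is proportional to exp(-β f(S)) · Z(S), where f(S) = w_0 p Q(S) + Σ_{j ∈ [k]\S} w_j (I_j(S) + p P_j(S)) and Z(S) = (n-k choose k-ℓ)(k-ℓ)! ∏_{j=1}^{ℓ} Σ_{r=0}^{k-j} e^{-β w_{s_j} r}. That is, Σ_{τ : τ∩[k]=S} exp(-β K^{p,w}(τ, τ*)) = exp(-β f(S)) Z(S). -/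
open Finset

/-- `i` is ranked by the top-`k` list `τ` (an injection `Fin k ↪ Fin n`). -/
def ranked {n k : ℕ} (τ : Fin k ↪ Fin n) (i : Fin n) : Prop := ∃ a, τ a = i

instance {n k : ℕ} (τ : Fin k ↪ Fin n) (i : Fin n) : Decidable (ranked τ i) :=
  inferInstanceAs (Decidable (∃ a, τ a = i))

/-- `i ≻_τ j`: `i` is ranked by `τ` and either `j` is unranked or `i` precedes `j`. -/
def above {n k : ℕ} (τ : Fin k ↪ Fin n) (i j : Fin n) : Prop :=
  ranked τ i ∧ ∀ b, τ b = j → ∃ a, a < b ∧ τ a = i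

instance {n k : ℕ} (τ : Fin k ↪ Fin n) (i j : Fin n) : Decidable (above τ i j) := by
  unfold above; infer_instance

/-- The inversion count `I_i(τ) = |{t > i : t ≻_τ i}|`. -/
def InvI {n k : ℕ} (τ : Fin k ↪ Fin n) (i : Fin n) : ℕ :=
  (Finset.univ.filter fun t : Fin n => i < t ∧ above τ t i).card

/-- `P_i(τ) = |{t > i : t and i both unranked by τ}|`. -/
def Pinv {n k : ℕ} (τ : Fin k ↪ Fin n) (i : Fin n) : ℕ :=
  (Finset.univ.filter fun t : Fin n => i < t ∧ ¬ ranked τ t ∧ ¬ ranked τ i).card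

/-- The center `τ* = (1,…,k)` as a finset: elements of value `< k`. -/
def centerF (n k : ℕ) : Finset (Fin n) := Finset.univ.filter fun i => (i : ℕ) < k

/-- The profile `τ ∩ τ*` of a top-`k` list. -/
def profileF {n k : ℕ} (τ : Fin k ↪ Fin n) : Finset (Fin n) :=
  Finset.univ.filter fun i => (i : ℕ) < k ∧ ranked τ i

/-- `Q(τ) = (k - |τ ∩ τ*| choose 2)`. -/
def Qinv {n k : ℕ} (τ : Fin k ↪ Fin n) : ℕ := (k - (profileF τ).card).choose 2

/-- The generalized top-`k` Mallows distance
`K^{p,w}(τ,τ*) = w₀ p Q(τ) + Σ_{i ∈ [k]} w_i (I_i(τ) + p P_i(τ))`. -/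
noncomputable def Kdist {n k : ℕ} (p w0 : ℝ) (w : Fin n → ℝ) (τ : Fin k ↪ Fin n) : ℝ :=
  w0 * p * (Qinv τ : ℕ) +
    ∑ i ∈ centerF n k, w i * ((InvI τ i : ℝ) + p * (Pinv τ i : ℝ))

/-- `f(S) = w₀ p Q(S) + Σ_{j ∈ [k]\S} w_j (I_j(S) + p P_j(S))`, depending only on the profile. -/
noncomputable def fS (n k : ℕ) (p w0 : ℝ) (w : Fin n → ℝ) (S : Finset (Fin n)) : ℝ :=
  w0 * p * ((k - S.card).choose 2 : ℕ) +
    ∑ j ∈ centerF n k \ S,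
      w j * ((((S.filter fun t => j < t).card + (k - S.card) : ℕ) : ℝ)
        + p * ((((centerF n k \ S).filter fun t => j < t).card + (n - k - (k - S.card)) : ℕ) : ℝ))

/-- `Z(S) = (n-k choose k-ℓ) (k-ℓ)! ∏_{j=1}^{ℓ} Σ_{r=0}^{k-j} e^{-β w_{s_j} r}`,
where `s_1 < s_2 < ⋯ < s_ℓ` are the elements of `S`. -/
noncomputable def ZS (n k : ℕ) (β : ℝ) (w : Fin n → ℝ) (S : Finset (Fin n)) : ℝ :=
  (((n - k).choose (k - S.card) * (k - S.card).factorial : ℕ) : ℝ) *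
    ∏ j : Fin S.card, ∑ r ∈ Finset.range (k - (j : ℕ)),
      Real.exp (-β * w ((S.orderIsoOfFin rfl j : S) : Fin n) * r)

/-! Since `Q`, and `I_j`, `P_j` for `j ∈ [k] \ S`, depend only on the profile `S = τ ∩ [k]`,
and `P_i(τ) = 0` for ranked `i`, we get `K^{p,w}(τ,τ*) = f(S) + Σ_{i∈S} w_i I_i(τ)`. It remains
to compute the generating function `Σ_τ ∏_{i∈S} x_i ^ I_i(τ)` over top-`m` lists with profile `S`.
The smallest element `s` of `S` is smaller than every other ranked item, so `I_s(τ)` is its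
position `r < m`, and deleting it leaves a top-`(m-1)` list with profile `S \ {s}` without
changing `I_i` for the other `i ∈ S`; this gives the factor `Σ_{r<m} x_s^r`. When `S = ∅` one
counts the injections of `Fin m` into the `n - k` items outside `[k]`. -/

open Finset Function

variable {n m k : ℕ}

lemma card_centerF : (centerF n k).card = min k n := by
  rw [← card_range (min k n), ← card_map Fin.valEmbedding]
  congr 1
  ext i
  simp only [centerF, mem_map, mem_filter, mem_univ, true_and, Fin.valEmbedding_apply, mem_range]
  constructor
  · rintro ⟨j, hj, rfl⟩
    exact lt_min hj j.isLt
  · intro hi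
    exact ⟨⟨i, (lt_min_iff.1 hi).2⟩, (lt_min_iff.1 hi).1, rfl⟩

lemma card_compl_centerF : (centerF n k)ᶜ.card = n - k := by
  rw [card_compl, card_centerF, Fintype.card_fin]
  omega

/-- `profileF` for top lists of any length `m`, as the recursion shortens the list. -/
def profile (k : ℕ) (τ : Fin m ↪ Fin n) : Finset (Fin n) :=
  Finset.univ.filter fun i => (i : ℕ) < k ∧ ranked τ i

lemma mem_profile {τ : Fin m ↪ Fin n} {i : Fin n} :
    i ∈ profile k τ ↔ (i : ℕ) < k ∧ ranked τ i := by simp [profile]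

def eraseAt (a : Fin (m + 1)) (τ : Fin (m + 1) ↪ Fin n) : Fin m ↪ Fin n :=
  (Fin.succAboveEmb a).trans τ

@[simp] lemma eraseAt_apply (a : Fin (m + 1)) (τ : Fin (m + 1) ↪ Fin n) (b : Fin m) :
    eraseAt a τ b = τ (a.succAbove b) := rfl

def insertAt (a : Fin (m + 1)) (s : Fin n) (τ : Fin m ↪ Fin n) (hs : ∀ b, τ b ≠ s) :
    Fin (m + 1) ↪ Fin n :=
  ⟨a.insertNth s τ, by
    intro x y
    induction x using a.succAboveCases <;> induction y using a.succAboveCases <;>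
      simp [hs, eq_comm (a := s)]⟩

@[simp] lemma insertAt_apply_self (a : Fin (m + 1)) (s : Fin n) (τ : Fin m ↪ Fin n)
    (hs : ∀ b, τ b ≠ s) : insertAt a s τ hs a = s :=
  Fin.insertNth_apply_same (α := fun _ => Fin n) ..

@[simp] lemma insertAt_apply_succAbove (a : Fin (m + 1)) (s : Fin n) (τ : Fin m ↪ Fin n)
    (hs : ∀ b, τ b ≠ s) (b : Fin m) : insertAt a s τ hs (a.succAbove b) = τ b :=
  Fin.insertNth_apply_succAbove (α := fun _ => Fin n) ..

lemma eraseAt_insertAt (a : Fin (m + 1)) (s : Fin n) (τ : Fin m ↪ Fin n) (hs : ∀ b, τ b ≠ s) :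
    eraseAt a (insertAt a s τ hs) = τ := by
  ext b; simp

lemma insertAt_eraseAt {a : Fin (m + 1)} {τ : Fin (m + 1) ↪ Fin n} {s : Fin n} (h : τ a = s)
    (hs : ∀ b, eraseAt a τ b ≠ s) : insertAt a s (eraseAt a τ) hs = τ := by
  ext b; induction b using a.succAboveCases <;> simp [h]

lemma ranked_iff_eraseAt (a : Fin (m + 1)) (τ : Fin (m + 1) ↪ Fin n) (i : Fin n) :
    ranked τ i ↔ τ a = i ∨ ranked (eraseAt a τ) i :=
  Fin.exists_iff_succAbove a

lemma above_eraseAt {a : Fin (m + 1)} {τ : Fin (m + 1) ↪ Fin n} {t i : Fin n}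
    (ht : τ a ≠ t) (hi : τ a ≠ i) : above (eraseAt a τ) t i ↔ above τ t i := by
  unfold above
  rw [ranked_iff_eraseAt a τ t, Fin.forall_iff_succAbove a]
  simp only [ht, hi, false_or, IsEmpty.forall_iff, true_and, eraseAt_apply]
  refine and_congr_right fun _ => forall_congr' fun b => imp_congr_right fun _ => ?_
  rw [Fin.exists_iff_succAbove a]
  simp [ht, Fin.succAbove_lt_succAbove_iff]

lemma profile_eraseAt (a : Fin (m + 1)) (τ : Fin (m + 1) ↪ Fin n) :
    profile k (eraseAt a τ) = (profile k τ).erase (τ a) := by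
  ext i
  by_cases hi : τ a = i
  · subst hi; simp [mem_profile, ranked]
  · simp [mem_profile, ranked_iff_eraseAt a τ i, hi, Ne.symm hi]

lemma profile_insertAt (a : Fin (m + 1)) (s : Fin n) (τ : Fin m ↪ Fin n) (hs : ∀ b, τ b ≠ s)
    (hsk : (s : ℕ) < k) : profile k (insertAt a s τ hs) = insert s (profile k τ) := by
  have hmem : s ∈ profile k (insertAt a s τ hs) := mem_profile.2 ⟨hsk, a, by simp⟩
  have herase := profile_eraseAt (k := k) a (insertAt a s τ hs)
  rw [eraseAt_insertAt, insertAt_apply_self] at herase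
  rw [herase, insert_erase hmem]

lemma InvI_apply_of_forall_le (τ : Fin m ↪ Fin n) (a : Fin m)
    (hmin : ∀ t, ranked τ t → τ a ≤ t) :
    InvI τ (τ a) = a := by
  have hfilter : (univ.filter fun t => τ a < t ∧ above τ t (τ a)) = (Iio a).map τ := by
    ext t
    simp only [mem_filter, mem_univ, true_and, mem_map, mem_Iio, above, ranked,
      τ.injective.eq_iff, forall_eq]
    constructor
    · rintro ⟨-, -, c, hc, rfl⟩
      exact ⟨c, hc, rfl⟩
    · rintro ⟨c, hc, rfl⟩
      exact ⟨(hmin _ ⟨c, rfl⟩).lt_of_ne (τ.injective.ne hc.ne'), ⟨c, rfl⟩, c, hc, rfl⟩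
  rw [InvI, hfilter, card_map, Fin.card_Iio]

lemma InvI_eraseAt {a : Fin (m + 1)} {τ : Fin (m + 1) ↪ Fin n} {i : Fin n} (hi : τ a < i) :
    InvI (eraseAt a τ) i = InvI τ i :=
  congrArg card <| filter_congr fun _ _ =>
    and_congr_right fun hit => above_eraseAt (hi.trans hit).ne hi.ne

theorem sum_prod_pow_InvI_insert {R : Type*} [CommSemiring R] (x : Fin n → R) {s : Fin n}
    {S : Finset (Fin n)} (hsk : (s : ℕ) < k) (hsS : ∀ t ∈ S, s < t) :
    ∑ τ ∈ univ.filter (fun τ : Fin (m + 1) ↪ Fin n => profile k τ = insert s S),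
        ∏ i ∈ insert s S, x i ^ InvI τ i =
      (∑ r ∈ range (m + 1), x s ^ r) *
        ∑ τ ∈ univ.filter (fun τ : Fin m ↪ Fin n => profile k τ = S), ∏ i ∈ S, x i ^ InvI τ i := by
  have hs_notMem : s ∉ S := fun h => (hsS s h).false
  have hs_unranked : ∀ τ : Fin m ↪ Fin n, profile k τ = S → ∀ b, τ b ≠ s := by
    rintro τ hτ b rfl
    exact hs_notMem (hτ ▸ mem_profile.2 ⟨hsk, b, rfl⟩)
  have hpos : ∀ τ : Fin (m + 1) ↪ Fin n, profile k τ = insert s S → τ (invFun τ s) = s :=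
    fun τ hτ => invFun_eq (mem_profile.1 (hτ ▸ mem_insert_self s S)).2
  rw [← Fin.sum_univ_eq_sum_range (fun r => x s ^ r), sum_mul_sum, ← sum_product']
  refine sum_bij' (fun τ _ => (invFun τ s, eraseAt (invFun τ s) τ))
    (fun p hp => insertAt p.1 s p.2 (hs_unranked p.2 (mem_filter.1 (mem_product.1 hp).2).2))
    ?_ ?_ ?_ ?_ ?_ <;> simp only [mem_filter, mem_univ, true_and, mem_product]
  · intro τ hτ
    rw [profile_eraseAt, hpos τ hτ, hτ, erase_insert hs_notMem]
  · rintro ⟨a, τ⟩ hτ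
    rw [profile_insertAt _ _ _ _ hsk, hτ]
  · intro τ hτ
    exact insertAt_eraseAt (hpos τ hτ) _
  · rintro ⟨a, τ⟩ hτ
    have ha : invFun (insertAt a s τ (hs_unranked τ hτ)) s = a := by
      simpa using leftInverse_invFun (insertAt a s τ (hs_unranked τ hτ)).injective a
    rw [ha, eraseAt_insertAt]
  · intro τ hτ
    have hmin : ∀ t, ranked τ t → τ (invFun τ s) ≤ t := by
      intro t ht
      rw [hpos τ hτ]
      by_cases htk : (t : ℕ) < k
      · rcases mem_insert.1 (hτ ▸ mem_profile.2 ⟨htk, ht⟩) with rfl | htS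
        exacts [le_rfl, (hsS t htS).le]
      · exact Fin.le_def.2 (by omega)
    have hInv : InvI τ s = invFun τ s := by
      simpa only [hpos τ hτ] using InvI_apply_of_forall_le τ _ hmin
    rw [prod_insert hs_notMem, hInv]
    refine congrArg _ (prod_congr rfl fun i hi => ?_)
    rw [InvI_eraseAt ((hpos τ hτ).symm ▸ hsS i hi)]

lemma profile_eq_empty_iff {τ : Fin m ↪ Fin n} :
    profile k τ = ∅ ↔ ∀ b, τ b ∈ (↑(centerF n k)ᶜ : Set (Fin n)) := by
  simp only [eq_empty_iff_forall_notMem, coe_compl, Set.mem_compl_iff, mem_coe, mem_profile,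
    centerF, ranked, mem_filter, mem_univ, true_and, not_and, not_exists, not_lt]
  exact ⟨fun h b => not_lt.1 fun hb => h _ hb b rfl, fun h _ hx b hb => (h b).not_gt (hb ▸ hx)⟩

theorem card_filter_profile_eq_empty :
    (univ.filter fun τ : Fin m ↪ Fin n => profile k τ = ∅).card
      = (n - k).choose m * m.factorial := by
  simp only [profile_eq_empty_iff]
  rw [← Fintype.card_subtype, Fintype.card_congr (Equiv.codRestrict _ _),
    Fintype.card_embedding_eq]
  simp only [coe_sort_coe, Fintype.card_coe, card_compl_centerF, Fintype.card_fin,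
    Nat.descFactorial_eq_factorial_mul_choose, mul_comm]

lemma image_univ_fin_succ {ℓ : ℕ} (s : Fin (ℓ + 1) → Fin n) :
    univ.image s = insert (s 0) (univ.image (s ∘ Fin.succ)) := by
  ext; simp [Fin.exists_fin_succ, eq_comm]

theorem sum_prod_pow_InvI {R : Type*} [CommSemiring R] (x : Fin n → R) {ℓ : ℕ}
    (s : Fin ℓ → Fin n) (hs : StrictMono s) (hsk : ∀ j, (s j : ℕ) < k) (hℓm : ℓ ≤ m) :
    ∑ τ ∈ univ.filter (fun τ : Fin m ↪ Fin n => profile k τ = univ.image s),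
        ∏ i ∈ univ.image s, x i ^ InvI τ i =
      (((n - k).choose (m - ℓ) * (m - ℓ).factorial : ℕ) : R) *
        ∏ j : Fin ℓ, ∑ r ∈ range (m - j), x (s j) ^ r := by
  induction ℓ generalizing m with
  | zero =>
    simp [card_filter_profile_eq_empty]
  | succ ℓ ih =>
    obtain ⟨m, rfl⟩ : ∃ m', m = m' + 1 := ⟨m - 1, by omega⟩
    have hmin : ∀ t ∈ univ.image (s ∘ Fin.succ), s 0 < t := by
      simpa using fun j => hs (Fin.succ_pos j)
    rw [image_univ_fin_succ, sum_prod_pow_InvI_insert x (hsk 0) hmin,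
      ih _ (hs.comp Fin.strictMono_succ) (fun j => hsk _) (by omega), Fin.prod_univ_succ]
    simp only [Nat.add_sub_add_right, Fin.val_zero, Nat.sub_zero, Fin.val_succ, comp_apply]
    ring

lemma mem_map_univ_iff_ranked {τ : Fin m ↪ Fin n} {i : Fin n} : i ∈ univ.map τ ↔ ranked τ i := by
  simp [ranked]

lemma InvI_of_not_ranked {τ : Fin m ↪ Fin n} {i : Fin n} (hi : ¬ ranked τ i) :
    InvI τ i = ((univ.map τ).filter (i < ·)).card := by
  rw [InvI]
  refine congrArg card (Finset.ext fun t => ?_)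
  simp only [mem_filter, mem_univ, true_and, mem_map_univ_iff_ranked (τ := τ)]
  exact ⟨fun h => ⟨h.2.1, h.1⟩, fun h => ⟨h.2, h.1, fun b hb => absurd ⟨b, hb⟩ hi⟩⟩

lemma Pinv_of_not_ranked {τ : Fin m ↪ Fin n} {i : Fin n} (hi : ¬ ranked τ i) :
    Pinv τ i = ((univ.map τ)ᶜ.filter (i < ·)).card := by
  rw [Pinv]
  refine congrArg card (Finset.ext fun t => ?_)
  simp only [mem_filter, mem_univ, true_and, mem_compl, mem_map_univ_iff_ranked (τ := τ), hi,
    not_false_eq_true, and_true]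
  exact and_comm

lemma Pinv_of_ranked {τ : Fin m ↪ Fin n} {i : Fin n} (hi : ranked τ i) : Pinv τ i = 0 := by
  simp [Pinv, hi]

lemma card_filter_lt_of_mem_centerF {i : Fin n} (hi : i ∈ centerF n k) (A : Finset (Fin n)) :
    (A.filter (i < ·)).card = ((A ∩ centerF n k).filter (i < ·)).card + (A \ centerF n k).card := by
  rw [← card_filter_add_card_filter_not (· ∈ centerF n k)]
  congr 2
  · ext t; simp [and_right_comm]
  · ext t
    simp only [centerF, mem_filter, mem_univ, true_and, mem_sdiff, not_lt] at hi ⊢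
    exact ⟨fun h => ⟨h.1.1, h.2⟩, fun h => ⟨⟨h.1, Fin.lt_def.2 (by omega)⟩, h.2⟩⟩

lemma profileF_eq_map_inter (τ : Fin k ↪ Fin n) : profileF τ = univ.map τ ∩ centerF n k := by
  ext i
  simp only [profileF, centerF, mem_filter, mem_univ, true_and, mem_inter,
    mem_map_univ_iff_ranked (τ := τ)]
  exact and_comm

lemma not_ranked_of_mem_sdiff_profileF {τ : Fin k ↪ Fin n} {i : Fin n}
    (hi : i ∈ centerF n k \ profileF τ) : ¬ ranked τ i := by
  rw [profileF_eq_map_inter, mem_sdiff, mem_inter, mem_map_univ_iff_ranked (τ := τ)] at hi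
  exact fun h => hi.2 ⟨h, hi.1⟩

lemma InvI_of_mem_sdiff_profileF {τ : Fin k ↪ Fin n} {i : Fin n}
    (hi : i ∈ centerF n k \ profileF τ) :
    InvI τ i = ((profileF τ).filter (i < ·)).card + (k - (profileF τ).card) := by
  rw [InvI_of_not_ranked (not_ranked_of_mem_sdiff_profileF hi),
    card_filter_lt_of_mem_centerF (mem_sdiff.1 hi).1, profileF_eq_map_inter, card_sdiff,
    inter_comm, card_map, card_univ, Fintype.card_fin]

lemma Pinv_of_mem_sdiff_profileF {τ : Fin k ↪ Fin n} {i : Fin n}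
    (hi : i ∈ centerF n k \ profileF τ) :
    Pinv τ i = ((centerF n k \ profileF τ).filter (i < ·)).card
      + (n - k - (k - (profileF τ).card)) := by
  have hkn : k ≤ n := by simpa using Fintype.card_le_of_embedding τ
  have hC : (centerF n k).card = k := by rw [card_centerF, min_eq_left hkn]
  have hT : (univ.map τ).card = k := by simp
  have hTC := card_union_add_card_inter (univ.map τ) (centerF n k)
  have hTC_le := card_le_univ (univ.map τ ∪ centerF n k)
  have hunranked : (univ.map τ)ᶜ ∩ centerF n k = centerF n k \ (univ.map τ ∩ centerF n k) := by
    ext; simp [and_comm]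
  have houtside : ((univ.map τ)ᶜ \ centerF n k).card = n - (univ.map τ ∪ centerF n k).card := by
    rw [sdiff_eq_inter_compl, ← compl_union, card_compl, Fintype.card_fin]
  rw [Pinv_of_not_ranked (not_ranked_of_mem_sdiff_profileF hi),
    card_filter_lt_of_mem_centerF (mem_sdiff.1 hi).1, profileF_eq_map_inter, hunranked, houtside]
  rw [Fintype.card_fin] at hTC_le
  have hTC_ge := card_le_card (inter_subset_left (s₁ := univ.map τ) (s₂ := centerF n k))
  omega

lemma profileF_subset_centerF (τ : Fin k ↪ Fin n) : profileF τ ⊆ centerF n k := by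
  rw [profileF_eq_map_inter]
  exact inter_subset_right

lemma Kdist_eq_fS_add (p w0 : ℝ) (w : Fin n → ℝ) (τ : Fin k ↪ Fin n) :
    Kdist p w0 w τ = fS n k p w0 w (profileF τ) + ∑ i ∈ profileF τ, w i * InvI τ i := by
  rw [Kdist, fS, Qinv, ← sum_sdiff (profileF_subset_centerF τ), add_assoc]
  congr 2
  · refine sum_congr rfl fun i hi => ?_
    rw [InvI_of_mem_sdiff_profileF hi, Pinv_of_mem_sdiff_profileF hi]
  · refine sum_congr rfl fun i hi => ?_
    have hranked : ranked τ i := ((mem_filter.1 hi).2).2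
    rw [Pinv_of_ranked hranked, Nat.cast_zero, mul_zero, add_zero]

lemma exp_neg_mul_Kdist (β p w0 : ℝ) (w : Fin n → ℝ) (τ : Fin k ↪ Fin n) :
    Real.exp (-β * Kdist p w0 w τ) = Real.exp (-β * fS n k p w0 w (profileF τ)) *
      ∏ i ∈ profileF τ, Real.exp (-β * w i) ^ InvI τ i := by
  rw [Kdist_eq_fS_add, mul_add, Real.exp_add, mul_sum, Real.exp_sum]
  refine congrArg _ (prod_congr rfl fun i _ => ?_)
  rw [← Real.exp_nat_mul]
  ring_nf

theorem stmt6_general (n k : ℕ) (β p w0 : ℝ) (w : Fin n → ℝ)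
    (S : Finset (Fin n)) (hS : ∀ i ∈ S, (i : ℕ) < k) :
    ∑ τ ∈ (Finset.univ.filter fun τ : Fin k ↪ Fin n => profileF τ = S),
        Real.exp (-β * Kdist p w0 w τ)
      = Real.exp (-β * fS n k p w0 w S) * ZS n k β w S := by
  have hcard : S.card ≤ k := by
    have hSC : S ⊆ centerF n k := fun i hi => mem_filter.2 ⟨mem_univ i, hS i hi⟩
    exact (card_le_card hSC).trans (card_centerF.trans_le (min_le_left k n))
  have hZ := sum_prod_pow_InvI (fun i => Real.exp (-β * w i)) (S.orderEmbOfFin rfl)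
    (S.orderEmbOfFin rfl).strictMono (fun j => hS _ (S.orderEmbOfFin_mem rfl j)) hcard
  rw [image_orderEmbOfFin_univ] at hZ
  rw [sum_congr rfl fun τ hτ => by rw [exp_neg_mul_Kdist, (mem_filter.1 hτ).2], ← mul_sum]
  congr 1
  refine hZ.trans ?_
  rw [ZS]
  congr 1
  refine prod_congr rfl fun j _ => sum_congr rfl fun r _ => ?_
  rw [← Real.exp_nat_mul, coe_orderIsoOfFin_apply]
  ring_nf

/-- Profile probability formula for the generalized top-`k` Mallows model:
`Σ_{τ : τ∩[k]=S} exp(-β K^{p,w}(τ,τ*)) = exp(-β f(S)) Z(S)`, so the probability of the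
profile `S` is proportional to `exp(-β f(S)) Z(S)`. -/
theorem stmt6 (n k : ℕ) (hk : k ≤ n) (β p w0 : ℝ) (hβ : 0 ≤ β) (hp : 0 < p)
    (hw0 : 0 ≤ w0) (w : Fin n → ℝ) (hw : ∀ i, 0 ≤ w i)
    (S : Finset (Fin n)) (hS : ∀ i ∈ S, (i : ℕ) < k) :
    ∑ τ ∈ (Finset.univ.filter fun τ : Fin k ↪ Fin n => profileF τ = S),
        Real.exp (-β * Kdist p w0 w τ)
      = Real.exp (-β * fS n k p w0 w S) * ZS n k β w S :=
  stmt6_general n k β p w0 w S hS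
end

section
/- The PRIM sampling scheme is correct: if the profile S is sampled with probability proportional to exp(-β f(S)) Z(S), and then, conditioned on S, a top-k list τ ∈ T(S) is generated with probability [1 / ((n-k choose k-ℓ)(k-ℓ)!)] · exp(-β Σ_{j∈S} w_j I_j(τ)) / ∏_{j=1}^{ℓ} Σ_{r=0}^{k-j} e^{-β w_{s_j} r}, then the overall probability of producing τ equals exp(-β K^{p,w}(τ,τ*)) / M, where M = Σ_{τ'} exp(-β K^{p,w}(τ',τ*)) is the normalizing constant of the generalized top-k Mallows model. -/
open Finset

/-!
Write `S` for the profile of `τ`. The distance splits as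
`K^{p,w}(τ,τ*) = f(S) + Σ_{j ∈ S} w_j I_j(τ)`, because for `j ∈ [k] \ S` the counts `I_j` and
`P_j` depend on `S` alone while `P_j = 0` for `j ∈ S`. Everything then follows from
`Σ_{τ ∈ T(S)} exp(-β Σ_{j ∈ S} w_j I_j(τ)) = Z(S)`, which also gives `M = Σ_S e^{-β f(S)} Z(S)`.
For that identity, peel off the least element `s` of `S`: it may sit at any of the `k` positions,
its count `I_s` is exactly its position since every other entry of `τ` is larger, and deleting it
leaves a top-`(k-1)` list whose remaining counts are unchanged. Once `S` is used up, the
`k - ℓ` free positions are filled injectively from the `n - k` elements outside `[k]`.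
-/

namespace TopKMallows

variable {n k : ℕ}

lemma card_filter_ranked (τ : Fin k ↪ Fin n) : #(univ.filter (ranked τ)) = k := by
  have : univ.filter (ranked τ) = univ.map τ := by ext t; simp [ranked]
  simp [this]

lemma card_centerF (hk : k ≤ n) : #(centerF n k) = k := by
  rw [centerF, Fin.card_filter_val_lt, min_eq_right hk]

lemma card_filter_le_val (hk : k ≤ n) : #(univ.filter fun t : Fin n => k ≤ (t : ℕ)) = n - k := by
  have := card_filter_add_card_filter_not (s := univ) (p := fun t : Fin n => (t : ℕ) < k)
  simp only [not_lt, card_univ, Fintype.card_fin] at this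
  rw [← centerF, card_centerF hk] at this
  omega

lemma profileF_subset_centerF (τ : Fin k ↪ Fin n) : profileF τ ⊆ centerF n k :=
  fun t ht => by simp_all [profileF, centerF]

lemma centerF_sdiff_profileF (τ : Fin k ↪ Fin n) :
    centerF n k \ profileF τ = univ.filter fun t : Fin n => (t : ℕ) < k ∧ ¬ ranked τ t := by
  ext t; simp only [profileF, centerF, mem_sdiff, mem_filter, mem_univ, true_and]; tauto

lemma card_filter_ranked_le_val (τ : Fin k ↪ Fin n) :
    #(univ.filter fun t : Fin n => ranked τ t ∧ k ≤ (t : ℕ)) = k - #(profileF τ) := by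
  have := card_filter_add_card_filter_not (s := univ.filter (ranked τ))
    (p := fun t : Fin n => (t : ℕ) < k)
  simp only [filter_filter, not_lt, card_filter_ranked] at this
  rw [show univ.filter (fun t : Fin n => ranked τ t ∧ (t : ℕ) < k) = profileF τ by
    ext; simp [profileF, and_comm]] at this
  omega

lemma card_filter_not_ranked_le_val (hk : k ≤ n) (τ : Fin k ↪ Fin n) :
    #(univ.filter fun t : Fin n => ¬ ranked τ t ∧ k ≤ (t : ℕ)) = n - k - (k - #(profileF τ)) := by
  have := card_filter_add_card_filter_not (s := univ.filter fun t : Fin n => k ≤ (t : ℕ))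
    (p := ranked τ)
  simp only [filter_filter, card_filter_le_val hk] at this
  rw [← card_filter_ranked_le_val τ]
  simp only [and_comm (a := k ≤ _)] at this
  omega

lemma card_filter_gt_eq (P : Fin n → Prop) [DecidablePred P] {i : Fin n} (hi : (i : ℕ) < k) :
    #(univ.filter fun t => i < t ∧ P t) =
      #((univ.filter fun t : Fin n => (t : ℕ) < k ∧ P t).filter (i < ·)) +
        #(univ.filter fun t : Fin n => P t ∧ k ≤ (t : ℕ)) := by
  have := card_filter_add_card_filter_not (s := univ.filter fun t => i < t ∧ P t)
    (p := fun t : Fin n => (t : ℕ) < k)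
  rw [← this, filter_filter, filter_filter, filter_filter]
  congr 2 <;> ext t <;> simp only [mem_filter, mem_univ, true_and, Fin.lt_def]
  · tauto
  · exact ⟨fun ⟨⟨_, hP⟩, hk⟩ => ⟨hP, by omega⟩, fun ⟨hP, hk⟩ => ⟨⟨by omega, hP⟩, by omega⟩⟩

lemma InvI_of_not_ranked (τ : Fin k ↪ Fin n) {i : Fin n} (hi : ¬ ranked τ i)
    (hik : (i : ℕ) < k) :
    InvI τ i = #((profileF τ).filter (i < ·)) + (k - #(profileF τ)) := by
  have habove : ∀ t, above τ t i ↔ ranked τ t :=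
    fun t => ⟨And.left, fun h => ⟨h, fun b hb => absurd ⟨b, hb⟩ hi⟩⟩
  simp only [InvI, habove, card_filter_gt_eq _ hik, card_filter_ranked_le_val]
  rfl

lemma Pinv_of_not_ranked (hk : k ≤ n) (τ : Fin k ↪ Fin n) {i : Fin n} (hi : ¬ ranked τ i)
    (hik : (i : ℕ) < k) :
    Pinv τ i = #((centerF n k \ profileF τ).filter (i < ·)) + (n - k - (k - #(profileF τ))) := by
  simp only [Pinv, hi, not_false_eq_true, and_true, card_filter_gt_eq _ hik,
    card_filter_not_ranked_le_val hk, centerF_sdiff_profileF]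

lemma Pinv_of_ranked (τ : Fin k ↪ Fin n) {i : Fin n} (hi : ranked τ i) : Pinv τ i = 0 := by
  simp [Pinv, hi]

lemma Kdist_eq_fS_add (hk : k ≤ n) (p w0 : ℝ) (w : Fin n → ℝ) (τ : Fin k ↪ Fin n) :
    Kdist p w0 w τ = fS n k p w0 w (profileF τ) + ∑ j ∈ profileF τ, w j * InvI τ j := by
  rw [Kdist, fS, Qinv, ← sum_sdiff (profileF_subset_centerF τ), add_assoc]
  congr 2
  · refine sum_congr rfl fun j hj => ?_
    simp only [centerF_sdiff_profileF, mem_filter, mem_univ, true_and] at hj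
    rw [InvI_of_not_ranked τ hj.2 hj.1, Pinv_of_not_ranked hk τ hj.2 hj.1]
  · refine sum_congr rfl fun j hj => ?_
    simp only [profileF, mem_filter, mem_univ, true_and] at hj
    simp [Pinv_of_ranked τ hj.2]

lemma InvI_eq_card_of_apply_eq (τ : Fin k ↪ Fin n) {b : Fin k} {x : Fin n} (hb : τ b = x) :
    InvI τ x = #(univ.filter fun a => a < b ∧ x < τ a) := by
  rw [InvI, ← card_map τ]
  congr 1
  ext t
  simp only [mem_filter, mem_univ, true_and, mem_map]
  simp only [above, ranked]
  constructor
  · rintro ⟨hxt, -, hpos⟩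
    obtain ⟨a, hab, rfl⟩ := hpos b hb
    exact ⟨a, ⟨hab, hxt⟩, rfl⟩
  · rintro ⟨a, ⟨hab, hxa⟩, rfl⟩
    exact ⟨hxa, ⟨a, rfl⟩, fun c hc => ⟨a, τ.injective (hc.trans hb.symm) ▸ hab, rfl⟩⟩

def insertNthEmb (b : Fin (k + 1)) (s : Fin n) (τ : Fin k ↪ Fin n) (hs : ∀ z, τ z ≠ s) :
    Fin (k + 1) ↪ Fin n :=
  ⟨Fin.insertNth b s τ, by
    intro i j h
    induction i using Fin.succAboveCases b <;> induction j using Fin.succAboveCases b <;>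
      simp_all [τ.injective.eq_iff, eq_comm]⟩

section Insert

variable (b : Fin (k + 1)) (s : Fin n) (τ : Fin k ↪ Fin n) (hs : ∀ z, τ z ≠ s)

@[simp] lemma insertNthEmb_apply_same : insertNthEmb b s τ hs b = s :=
  Fin.insertNth_apply_same (α := fun _ => Fin n) _ _ _

@[simp] lemma insertNthEmb_apply_succAbove (z : Fin k) :
    insertNthEmb b s τ hs (b.succAbove z) = τ z :=
  Fin.insertNth_apply_succAbove (α := fun _ => Fin n) _ _ _ _

lemma InvI_insertNthEmb_self (hlt : ∀ z, s < τ z) : InvI (insertNthEmb b s τ hs) s = b := by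
  rw [InvI_eq_card_of_apply_eq _ (insertNthEmb_apply_same b s τ hs), ← Fin.card_Iio]
  congr 1
  ext a
  simp only [mem_filter, mem_univ, true_and, mem_Iio, and_iff_left_iff_imp]
  intro hab
  obtain ⟨z, rfl⟩ := Fin.exists_succAbove_eq hab.ne
  simpa using hlt z

lemma InvI_insertNthEmb_of_lt {x : Fin n} (hsx : s < x) {c : Fin k} (hc : τ c = x) :
    InvI (insertNthEmb b s τ hs) x = InvI τ x := by
  have hx : insertNthEmb b s τ hs (b.succAbove c) = x := by simpa using hc
  rw [InvI_eq_card_of_apply_eq _ hx, InvI_eq_card_of_apply_eq _ hc, ← card_map b.succAboveEmb]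
  congr 1
  ext a
  simp only [mem_filter, mem_univ, true_and, mem_map, Fin.coe_succAboveEmb]
  constructor
  · rintro ⟨hac, hxa⟩
    have hab : a ≠ b := by
      rintro rfl
      exact lt_asymm hsx (by simpa using hxa)
    obtain ⟨z, rfl⟩ := Fin.exists_succAbove_eq hab
    simp only [insertNthEmb_apply_succAbove, Fin.succAbove_lt_succAbove_iff] at hac hxa
    exact ⟨z, ⟨hac, hxa⟩, rfl⟩
  · rintro ⟨z, hz, rfl⟩
    simpa using hz

end Insert

noncomputable def listsInRanking (k : ℕ) (V : Finset (Fin n)) (L : List (Fin n)) :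
    Finset (Fin k ↪ Fin n) :=
  univ.filter fun τ => (∀ i, τ i ∈ V) ∧ ∀ x ∈ L, ranked τ x

lemma insertNthEmb_mem_listsInRanking {V : Finset (Fin n)} {s : Fin n} {L : List (Fin n)}
    {b : Fin (k + 1)} {τ : Fin k ↪ Fin n} {hs : ∀ z, τ z ≠ s} (hsV : s ∈ V)
    (hτ : τ ∈ listsInRanking k (V.erase s) L) :
    insertNthEmb b s τ hs ∈ listsInRanking (k + 1) V (s :: L) := by
  obtain ⟨hV, hL⟩ := (mem_filter.1 hτ).2
  refine mem_filter.2 ⟨mem_univ _, fun i => ?_, ?_⟩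
  · induction i using Fin.succAboveCases b <;> simp [hsV, mem_of_mem_erase (hV _)]
  · simp only [List.mem_cons, forall_eq_or_imp]
    refine ⟨⟨b, by simp⟩, fun x hx => ?_⟩
    obtain ⟨c, rfl⟩ := hL x hx
    exact ⟨b.succAbove c, by simp⟩

lemma succAboveEmb_trans_mem_listsInRanking {V : Finset (Fin n)} {s : Fin n}
    {L : List (Fin n)} {b : Fin (k + 1)} {τ : Fin (k + 1) ↪ Fin n}
    (hτ : τ ∈ listsInRanking (k + 1) V (s :: L)) (hb : τ b = s) (hsL : s ∉ L) :
    b.succAboveEmb.trans τ ∈ listsInRanking k (V.erase s) L := by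
  obtain ⟨hV, hL⟩ := (mem_filter.1 hτ).2
  refine mem_filter.2 ⟨mem_univ _, fun z => mem_erase.2 ⟨?_, hV _⟩, fun x hx => ?_⟩
  · rw [← hb]
    exact τ.injective.ne (Fin.succAbove_ne b z)
  · obtain ⟨a, rfl⟩ := hL x (List.mem_cons_of_mem s hx)
    have hab : a ≠ b := by
      rintro rfl
      exact hsL (hb ▸ hx)
    obtain ⟨z, rfl⟩ := Fin.exists_succAbove_eq hab
    exact ⟨z, rfl⟩

section Count

variable {R : Type*} [CommSemiring R] (g : Fin n → ℕ → R)

lemma card_listsInRanking_nil (V : Finset (Fin n)) :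
    #(listsInRanking k V []) = (#V).descFactorial k := by
  have : listsInRanking k V [] =
      univ.filter fun τ : Fin k ↪ Fin n => ∀ i, τ i ∈ (V : Set (Fin n)) := by
    simp [listsInRanking]
  rw [this, ← Fintype.card_subtype, Fintype.card_congr (Equiv.codRestrict _ _),
    Fintype.card_embedding_eq]
  simp

lemma sum_listsInRanking_cons {V : Finset (Fin n)} {s : Fin n} {L : List (Fin n)}
    (hsV : s ∈ V) (hsmin : ∀ v ∈ V, s ≤ v) (hsL : ∀ x ∈ L, s < x) :
    ∑ τ ∈ listsInRanking (k + 1) V (s :: L), ((s :: L).map fun x => g x (InvI τ x)).prod =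
      (∑ r ∈ range (k + 1), g s r) *
        ∑ τ ∈ listsInRanking k (V.erase s) L, (L.map fun x => g x (InvI τ x)).prod := by
  have hne : ∀ τ ∈ listsInRanking k (V.erase s) L, ∀ z, τ z ≠ s := fun τ hτ z =>
    ne_of_mem_erase ((mem_filter.1 hτ).2.1 z)
  rw [← Fin.sum_univ_eq_sum_range, sum_mul_sum, ← sum_product']
  symm
  refine sum_bij (fun p hp => insertNthEmb p.1 s p.2 (hne p.2 (mem_product.1 hp).2)) ?_ ?_ ?_ ?_
  · exact fun p hp => insertNthEmb_mem_listsInRanking hsV (mem_product.1 hp).2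
  · rintro ⟨b, τ⟩ hp ⟨b', τ'⟩ hp' h
    obtain rfl : b = b' := by
      by_contra hbb
      obtain ⟨z, rfl⟩ := Fin.exists_succAbove_eq hbb
      have := DFunLike.congr_fun h (b'.succAbove z)
      simp only [insertNthEmb_apply_same, insertNthEmb_apply_succAbove] at this
      exact hne τ' (mem_product.1 hp').2 z this.symm
    refine Prod.ext rfl (DFunLike.ext _ _ fun z => ?_)
    simpa using DFunLike.congr_fun h (b.succAbove z)
  · intro τ hτ
    obtain ⟨b, hb⟩ := (mem_filter.1 hτ).2.2 s List.mem_cons_self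
    refine ⟨(b, _), mem_product.2 ⟨mem_univ b, succAboveEmb_trans_mem_listsInRanking hτ hb
      fun hs => (hsL s hs).false⟩, DFunLike.ext _ _ fun i => ?_⟩
    induction i using Fin.succAboveCases b <;> simp [hb]
  · rintro ⟨b, τ⟩ hp
    obtain ⟨hV, hL⟩ := (mem_filter.1 (mem_product.1 hp).2).2
    have hlt : ∀ z, s < τ z := fun z =>
      (hsmin _ (mem_of_mem_erase (hV z))).lt_of_ne (hne τ (mem_product.1 hp).2 z).symm
    rw [List.map_cons, List.prod_cons, InvI_insertNthEmb_self _ _ _ _ hlt]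
    congr 1
    refine congrArg List.prod (List.map_congr_left fun x hx => ?_)
    obtain ⟨c, hc⟩ := hL x hx
    rw [InvI_insertNthEmb_of_lt _ _ _ _ (hsL x hx) hc]

lemma sum_listsInRanking_prod (L : List (Fin n)) (hL : L.Pairwise (· < ·)) (k : ℕ)
    (V : Finset (Fin n)) (hLV : ∀ x ∈ L, x ∈ V) (hVL : ∀ v ∈ V, v ∉ L → ∀ x ∈ L, x < v) :
    ∑ τ ∈ listsInRanking k V L, (L.map fun x => g x (InvI τ x)).prod =
      (#V - L.length).descFactorial (k - L.length) *
        ∏ j : Fin L.length, ∑ r ∈ range (k - j), g L[j] r := by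
  induction L generalizing k V with
  | nil => simp [card_listsInRanking_nil]
  | cons s L ih =>
    obtain ⟨hsL, hL⟩ := List.pairwise_cons.1 hL
    cases k with
    | zero =>
      have : listsInRanking 0 V (s :: L) = ∅ :=
        filter_eq_empty_iff.2 fun τ _ h => (h.2 s List.mem_cons_self).elim (fun a _ => a.elim0)
      simp [this]
    | succ k =>
      have hsV : s ∈ V := hLV s List.mem_cons_self
      have hsmin : ∀ v ∈ V, s ≤ v := fun v hv => by
        by_cases hvL : v ∈ s :: L
        · rcases List.mem_cons.1 hvL with rfl | h
          exacts [le_rfl, (hsL v h).le]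
        · exact (hVL v hv hvL s List.mem_cons_self).le
      rw [sum_listsInRanking_cons g hsV hsmin hsL, ih hL k (V.erase s)
        (fun x hx => mem_erase.2 ⟨(hsL x hx).ne', hLV x (List.mem_cons_of_mem s hx)⟩)
        (fun v hv hvL x hx => hVL v (mem_of_mem_erase hv)
          (by simp [ne_of_mem_erase hv, hvL]) x (List.mem_cons_of_mem s hx)),
        card_erase_of_mem hsV]
      simp only [List.length_cons, Fin.prod_univ_succ, Fin.val_zero, Fin.val_succ,
        Fin.getElem_fin, List.getElem_cons_zero, List.getElem_cons_succ, Nat.sub_zero,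
        Nat.add_sub_add_right]
      rw [show #V - 1 - L.length = #V - (L.length + 1) by omega]
      ring

end Count

lemma filter_profileF_eq (S : Finset (Fin n)) (hS : S ⊆ centerF n k) :
    univ.filter (fun τ : Fin k ↪ Fin n => profileF τ = S) =
      listsInRanking k (S ∪ univ.filter fun t : Fin n => k ≤ (t : ℕ)) (S.sort) := by
  have hSk : ∀ x ∈ S, (x : ℕ) < k := fun x hx => by simpa [centerF] using hS hx
  refine filter_congr fun τ _ => ⟨?_, ?_⟩
  · rintro rfl
    refine ⟨fun i => ?_, fun x hx => ((mem_filter.1 ((mem_sort _).1 hx)).2.2)⟩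
    by_cases hi : (τ i : ℕ) < k
    · exact mem_union_left _ (mem_filter.2 ⟨mem_univ _, hi, i, rfl⟩)
    · exact mem_union_right _ (mem_filter.2 ⟨mem_univ _, not_lt.1 hi⟩)
  · rintro ⟨hV, hL⟩
    ext t
    simp only [profileF, mem_filter, mem_univ, true_and]
    refine ⟨fun ⟨htk, a, ha⟩ => ?_, fun ht => ⟨hSk t ht, hL t ((mem_sort _).2 ht)⟩⟩
    rcases mem_union.1 (hV a) with h | h
    · rwa [ha] at h
    · exact absurd (ha ▸ (mem_filter.1 h).2) (not_le.2 htk)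

lemma sum_filter_profileF_eq_ZS (hk : k ≤ n) (β : ℝ) (w : Fin n → ℝ) (S : Finset (Fin n))
    (hS : S ⊆ centerF n k) :
    ∑ τ ∈ univ.filter (fun τ : Fin k ↪ Fin n => profileF τ = S),
        Real.exp (-β * ∑ j ∈ S, w j * InvI τ j) = ZS n k β w S := by
  have hSk : ∀ x ∈ S, (x : ℕ) < k := fun x hx => by simpa [centerF] using hS hx
  have hexp : ∀ τ : Fin k ↪ Fin n, Real.exp (-β * ∑ j ∈ S, w j * InvI τ j) =
      (S.sort.map fun x => Real.exp (-β * w x * InvI τ x)).prod := by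
    intro τ
    rw [← List.prod_toFinset _ (sort_nodup S _), sort_toFinset, mul_sum, Real.exp_sum]
    simp only [mul_assoc]
  have hcard : #(S ∪ univ.filter fun t : Fin n => k ≤ (t : ℕ)) = #S + (n - k) := by
    rw [card_union_of_disjoint, card_filter_le_val hk]
    exact disjoint_left.2 fun x hxS hx => (not_le.2 (hSk x hxS)) (mem_filter.1 hx).2
  rw [filter_profileF_eq S hS, sum_congr rfl fun τ _ => hexp τ]
  refine (sum_listsInRanking_prod (fun x (r : ℕ) => Real.exp (-β * w x * r)) _
    (sortedLT_sort S).pairwise k _ (fun x hx => mem_union_left _ ((mem_sort _).1 hx)) ?_).trans ?_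
  · intro v hv hvS x hx
    rcases mem_union.1 hv with h | h
    · exact absurd ((mem_sort _).2 h) hvS
    · exact Fin.lt_def.2 ((hSk x ((mem_sort _).1 hx)).trans_le (mem_filter.1 h).2)
  · rw [hcard, ZS]
    congr 1
    · rw [length_sort, Nat.add_sub_cancel_left, Nat.descFactorial_eq_factorial_mul_choose,
        mul_comm]
    · exact Fintype.prod_equiv (finCongr (length_sort _)) _ _ fun j => rfl

lemma exp_neg_mul_Kdist (hk : k ≤ n) (β p w0 : ℝ) (w : Fin n → ℝ) (τ : Fin k ↪ Fin n) :
    Real.exp (-β * Kdist p w0 w τ) = Real.exp (-β * fS n k p w0 w (profileF τ)) *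
      Real.exp (-β * ∑ j ∈ profileF τ, w j * InvI τ j) := by
  rw [Kdist_eq_fS_add hk, mul_add, Real.exp_add]

lemma sum_exp_neg_mul_Kdist (hk : k ≤ n) (β p w0 : ℝ) (w : Fin n → ℝ) :
    ∑ τ : Fin k ↪ Fin n, Real.exp (-β * Kdist p w0 w τ) =
      ∑ S ∈ (centerF n k).powerset, Real.exp (-β * fS n k p w0 w S) * ZS n k β w S := by
  rw [← sum_fiberwise_of_maps_to (g := profileF)
    fun τ _ => mem_powerset.2 (profileF_subset_centerF τ)]
  refine sum_congr rfl fun S hS => ?_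
  rw [← sum_filter_profileF_eq_ZS hk β w S (mem_powerset.1 hS), mul_sum]
  refine sum_congr rfl fun τ hτ => ?_
  rw [exp_neg_mul_Kdist hk, (mem_filter.1 hτ).2]

lemma ZS_profileF_pos (hk : k ≤ n) (β : ℝ) (w : Fin n → ℝ) (τ : Fin k ↪ Fin n) :
    0 < ZS n k β w (profileF τ) := by
  rw [← sum_filter_profileF_eq_ZS hk β w _ (profileF_subset_centerF τ)]
  exact sum_pos (fun _ _ => Real.exp_pos _) ⟨τ, mem_filter.2 ⟨mem_univ τ, rfl⟩⟩

end TopKMallows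

theorem stmt7_general (n k : ℕ) (hk : k ≤ n) (β p w0 : ℝ) (w : Fin n → ℝ)
    (τ : Fin k ↪ Fin n) (S : Finset (Fin n)) (hS : profileF τ = S) :
    (Real.exp (-β * fS n k p w0 w S) * ZS n k β w S /
        ∑ S' ∈ (centerF n k).powerset, Real.exp (-β * fS n k p w0 w S') * ZS n k β w S') *
      (Real.exp (-β * ∑ j ∈ S, w j * (InvI τ j : ℝ)) / ZS n k β w S)
      = Real.exp (-β * Kdist p w0 w τ) /
          ∑ τ' : Fin k ↪ Fin n, Real.exp (-β * Kdist p w0 w τ') := by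
  subst hS
  rw [← TopKMallows.sum_exp_neg_mul_Kdist hk, TopKMallows.exp_neg_mul_Kdist hk,
    div_mul_div_comm, mul_right_comm _ (ZS _ _ _ _ _),
    mul_div_mul_right _ _ (TopKMallows.ZS_profileF_pos hk β w τ).ne']

/-- Correctness of PRIM: sampling a profile `S` with probability proportional to
`exp(-β f(S)) Z(S)` and then a list `τ ∈ T(S)` with probability
`exp(-β Σ_{j∈S} w_j I_j(τ)) / Z(S)` produces `τ` with its generalized top-`k`
Mallows probability `exp(-β K^{p,w}(τ,τ*)) / M`. -/
theorem stmt7 (n k : ℕ) (hk : k ≤ n) (β p w0 : ℝ) (hβ : 0 ≤ β) (hp : 0 < p)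
    (hw0 : 0 ≤ w0) (w : Fin n → ℝ) (hw : ∀ i, 0 ≤ w i)
    (τ : Fin k ↪ Fin n) (S : Finset (Fin n)) (hS : profileF τ = S) :
    (Real.exp (-β * fS n k p w0 w S) * ZS n k β w S /
        ∑ S' ∈ (centerF n k).powerset, Real.exp (-β * fS n k p w0 w S') * ZS n k β w S') *
      (Real.exp (-β * ∑ j ∈ S, w j * (InvI τ j : ℝ)) / ZS n k β w S)
      = Real.exp (-β * Kdist p w0 w τ) /
          ∑ τ' : Fin k ↪ Fin n, Real.exp (-β * Kdist p w0 w τ') :=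
  stmt7_general n k hk β p w0 w τ S hS
end

section
/- For the identity center τ* over [n] and a top-k list τ with S = τ ∩ [k], |S| = ℓ, and any j ∈ [k] \ S: the number of elements t > j that are ranked by τ equals |{t ∈ S : t > j}| + (k - ℓ), and the number of elements t > j such that both t and j are unranked by τ equals |{t ∈ [k] \ S : t > j}| + (n - k - (k - ℓ)). -/
open Finset

/-! Every `t ≥ k` exceeds `j`, so both counts split at `k`: below `k` they are read off `S` and
`[k] \ S`; above `k` they count the `k - ℓ` ranked elements outside `[k]` (the list has `k`
entries, `ℓ` of them in `S`) and the `(n - k) - (k - ℓ)` unranked ones. -/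

section
variable {n k : ℕ}

lemma card_filter_not_val_lt : #{t : Fin n | ¬ (t : ℕ) < k} = n - k := by
  rw [filter_not, card_sdiff_of_subset (filter_subset _ _), Fin.card_filter_val_lt, card_univ,
    Fintype.card_fin]
  omega

lemma card_filter_lt_and_eq_add (p : Fin n → Prop) [DecidablePred p] {j : Fin n}
    (hjk : (j : ℕ) < k) :
    #{t | j < t ∧ p t} = #(({t | (t : ℕ) < k ∧ p t} : Finset (Fin n)).filter (j < ·))
      + #{t : Fin n | ¬ (t : ℕ) < k ∧ p t} := by
  rw [← card_filter_add_card_filter_not (p := fun t : Fin n => (t : ℕ) < k)]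
  congr 2 <;> ext t <;> simp only [mem_filter, mem_univ, true_and, Fin.lt_def] <;> grind

variable (τ : Fin k ↪ Fin n)

lemma card_filter_ranked : #{t | ranked τ t} = k := by
  have : ({t | ranked τ t} : Finset (Fin n)) = univ.map τ := by
    ext t; rw [mem_filter, mem_map]; simp [ranked]
  rw [this, card_map, card_univ, Fintype.card_fin]

lemma card_filter_not_val_lt_and_ranked :
    #{t : Fin n | ¬ (t : ℕ) < k ∧ ranked τ t} = k - #(profileF τ) := by
  have hsplit := card_filter_add_card_filter_not (s := {t : Fin n | ranked τ t})
    (fun t : Fin n => (t : ℕ) < k)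
  rw [filter_filter, filter_filter, card_filter_ranked] at hsplit
  simp only [and_comm (a := ranked τ _)] at hsplit
  have hprofile : #(profileF τ) = #{t : Fin n | (t : ℕ) < k ∧ ranked τ t} := rfl
  omega

lemma card_filter_not_val_lt_and_not_ranked :
    #{t : Fin n | ¬ (t : ℕ) < k ∧ ¬ ranked τ t} = n - k - (k - #(profileF τ)) := by
  have hsplit := card_filter_add_card_filter_not (s := {t : Fin n | ¬ (t : ℕ) < k}) (ranked τ)
  rw [filter_filter, filter_filter, card_filter_not_val_lt] at hsplit
  have := card_filter_not_val_lt_and_ranked τ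
  omega

lemma centerF_sdiff_profileF :
    centerF n k \ profileF τ = ({t | (t : ℕ) < k ∧ ¬ ranked τ t} : Finset (Fin n)) := by
  ext t; simp only [centerF, profileF, mem_sdiff, mem_filter, mem_univ, true_and]; tauto

end

theorem stmt19_general (n k ℓ : ℕ) (τ : Fin k ↪ Fin n) (S : Finset (Fin n))
    (hS : profileF τ = S) (hℓ : S.card = ℓ) (j : Fin n) (hjk : (j : ℕ) < k)
    (hj : ¬ ranked τ j) :
    (Finset.univ.filter fun t : Fin n => j < t ∧ ranked τ t).card
        = (S.filter fun t => j < t).card + (k - ℓ) ∧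
    (Finset.univ.filter fun t : Fin n => j < t ∧ ¬ ranked τ t ∧ ¬ ranked τ j).card
        = ((centerF n k \ S).filter fun t => j < t).card + (n - k - (k - ℓ)) := by
  subst hS hℓ
  constructor
  · rw [card_filter_lt_and_eq_add (ranked τ) hjk, card_filter_not_val_lt_and_ranked]
    rfl
  · simp only [hj, not_false_eq_true, and_true]
    rw [card_filter_lt_and_eq_add (¬ ranked τ ·) hjk, card_filter_not_val_lt_and_not_ranked,
      centerF_sdiff_profileF]

/-- For the identity center, a top-`k` list `τ` with profile `S = τ ∩ [k]`, `|S| = ℓ`,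
and any `j ∈ [k] \ S`: the number of elements `t > j` ranked by `τ` equals
`|{t ∈ S : t > j}| + (k - ℓ)`, and the number of elements `t > j` with both `t` and `j`
unranked by `τ` equals `|{t ∈ [k]\S : t > j}| + (n - k - (k - ℓ))`. -/
theorem stmt19 (n k ℓ : ℕ) (hk : k ≤ n) (τ : Fin k ↪ Fin n) (S : Finset (Fin n))
    (hS : profileF τ = S) (hℓ : S.card = ℓ) (j : Fin n) (hjk : (j : ℕ) < k)
    (hj : ¬ ranked τ j) :
    (Finset.univ.filter fun t : Fin n => j < t ∧ ranked τ t).card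
        = (S.filter fun t => j < t).card + (k - ℓ) ∧
    (Finset.univ.filter fun t : Fin n => j < t ∧ ¬ ranked τ t ∧ ¬ ranked τ j).card
        = ((centerF n k \ S).filter fun t => j < t).card + (n - k - (k - ℓ)) :=
  stmt19_general n k ℓ τ S hS hℓ j hjk hj
end
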